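/- Let f = (1/n) ∑_{j=1}^n f_j with each f_j : ℝ^p → ℝ convex and L_j-smooth, L̄ = (1/n)∑_j L_j, and let p_j = L_j/(n·L̄) be sampling probabilities. For any x, w ∈ ℝ^p, if j is sampled with probability p_j, then E_j[‖(1/(n·p_j))(∇f_j(x) − ∇f_j(w))‖²] ≤ 2L̄·(f(w) − f(x) − ⟨∇f(x), w − x⟩). -/

import Mathlib

open InnerProductSpace Finset

section Aux

variable {E : Type*} [NormedAddCommGroup E] [InnerProductSpace ℝ E] [CompleteSpace E]

/-- Derivative of `g` along the line `t ↦ a + t • v`. -/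
lemma hasDerivAt_line {g : E → ℝ} {G : E} {a v : E} {t : ℝ}
    (hg : HasGradientAt g G (a + t • v)) :
    HasDerivAt (fun s : ℝ => g (a + s • v)) ⟪G, v⟫_ℝ t := by
  have hc : HasDerivAt (fun s : ℝ => a + s • v) v t := by
    simpa using ((hasDerivAt_id t).smul_const v).const_add a
  have := (hg.hasFDerivAt).comp_hasDerivAt t hc
  simpa [Function.comp_def] using this

/-- Gradient inequality for convex functions. -/
lemma convex_grad_ineq {g : E → ℝ} {G : E} {a : E}
    (hconv : ConvexOn ℝ Set.univ g) (hg : HasGradientAt g G a) (b : E) :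
    g a + ⟪G, b - a⟫_ℝ ≤ g b := by
  set φ : ℝ → ℝ := fun t => g (a + t • (b - a)) with hφ
  have hφconv : ConvexOn ℝ Set.univ φ := by
    have := hconv.comp_affineMap
      (AffineMap.const ℝ ℝ a + (LinearMap.toSpanSingleton ℝ E (b - a)).toAffineMap)
    simpa [φ, Set.preimage_univ, Function.comp_def, Pi.add_apply, Function.const_apply, LinearMap.toSpanSingleton_apply] using this
  have hd : HasDerivAt φ ⟪G, b - a⟫_ℝ 0 := by
    have := hasDerivAt_line (a := a) (v := b - a) (t := 0) (by simpa using hg)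
    simpa [φ] using this
  have hs := hφconv.le_slope_of_hasDerivAt (Set.mem_univ (0:ℝ)) (Set.mem_univ (1:ℝ))
    one_pos hd
  have : ⟪G, b - a⟫_ℝ ≤ φ 1 - φ 0 := by
    simpa [slope_def_field] using hs
  have h0 : φ 0 = g a := by simp [φ]
  have h1 : φ 1 = g b := by simp [φ]
  rw [h0, h1] at this
  linarith

/-- Descent lemma for functions with Lipschitz gradient. -/
lemma descent_lemma {g : E → ℝ} {g' : E → E} {L : ℝ} (hL : 0 < L)
    (hg : ∀ y, HasGradientAt g (g' y) y)
    (hlip : ∀ u v, ‖g' u - g' v‖ ≤ L * ‖u - v‖) (a b : E) :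
    g b ≤ g a + ⟪g' a, b - a⟫_ℝ + L / 2 * ‖b - a‖ ^ 2 := by
  set v : E := b - a with hv
  set h : ℝ → ℝ := fun t => g (a + t • v) - t * ⟪g' a, v⟫_ℝ - L / 2 * t ^ 2 * ‖v‖ ^ 2
    with hh
  have hder : ∀ t : ℝ, HasDerivAt h
      (⟪g' (a + t • v), v⟫_ℝ - ⟪g' a, v⟫_ℝ - L * t * ‖v‖ ^ 2) t := by
    intro t
    have h1 : HasDerivAt (fun s : ℝ => g (a + s • v)) ⟪g' (a + t • v), v⟫_ℝ t :=
      hasDerivAt_line (hg _)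
    have h2 : HasDerivAt (fun s : ℝ => s * ⟪g' a, v⟫_ℝ) ⟪g' a, v⟫_ℝ t := by
      simpa using (hasDerivAt_id t).mul_const ⟪g' a, v⟫_ℝ
    have h3 : HasDerivAt (fun s : ℝ => L / 2 * s ^ 2 * ‖v‖ ^ 2)
        (L * t * ‖v‖ ^ 2) t := by
      have : HasDerivAt (fun s : ℝ => s ^ 2) (2 * t) t := by
        simpa using hasDerivAt_pow 2 t
      have := ((this.const_mul (L / 2)).mul_const (‖v‖ ^ 2))
      exact this.congr_deriv (by ring)
    simpa [hh, Pi.sub_def] using (h1.sub h2).sub h3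
  have hanti : AntitoneOn h (Set.Icc 0 1) := by
    apply antitoneOn_of_deriv_nonpos (convex_Icc 0 1)
    · exact fun t _ => ((hder t).continuousAt).continuousWithinAt
    · intro t ht
      exact ((hder t).differentiableAt).differentiableWithinAt
    · intro t ht
      rw [interior_Icc] at ht
      rw [(hder t).deriv]
      have key : ⟪g' (a + t • v) - g' a, v⟫_ℝ ≤ L * t * ‖v‖ ^ 2 := by
        calc ⟪g' (a + t • v) - g' a, v⟫_ℝ ≤ ‖g' (a + t • v) - g' a‖ * ‖v‖ :=
              real_inner_le_norm _ _
          _ ≤ (L * ‖(a + t • v) - a‖) * ‖v‖ := by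
              have := hlip (a + t • v) a
              exact mul_le_mul_of_nonneg_right this (norm_nonneg v)
          _ = L * t * ‖v‖ ^ 2 := by
              rw [add_sub_cancel_left, norm_smul, Real.norm_eq_abs,
                abs_of_pos ht.1]
              ring
      rw [inner_sub_left] at key
      linarith
  have h01 : h 1 ≤ h 0 := hanti (Set.mem_Icc.2 ⟨le_refl 0, zero_le_one⟩)
    (Set.mem_Icc.2 ⟨zero_le_one, le_refl 1⟩) zero_le_one
  have h0 : h 0 = g a := by simp [hh]
  have h1 : h 1 = g b - ⟪g' a, v⟫_ℝ - L / 2 * ‖v‖ ^ 2 := by simp [hh, hv]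
  rw [h0, h1] at h01
  linarith

/-- Cocoercivity-type bound for convex smooth functions. -/
lemma grad_sq_le {g : E → ℝ} {g' : E → E} {L : ℝ} (hL : 0 < L)
    (hconv : ConvexOn ℝ Set.univ g)
    (hg : ∀ y, HasGradientAt g (g' y) y)
    (hlip : ∀ u v, ‖g' u - g' v‖ ≤ L * ‖u - v‖) (x w : E) :
    ‖g' x - g' w‖ ^ 2 ≤ 2 * L * (g w - g x - ⟪g' x, w - x⟫_ℝ) := by
  set d : E := g' w - g' x with hd
  set u : E := w - L⁻¹ • d with hu
  have hA := descent_lemma hL hg hlip w u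
  have hB := convex_grad_ineq hconv (hg x) u
  have huw : u - w = -(L⁻¹ • d) := by rw [hu]; abel
  have hux : u - x = (w - x) - L⁻¹ • d := by rw [hu]; abel
  have e1 : ⟪g' w, u - w⟫_ℝ = -(L⁻¹ * ⟪g' w, d⟫_ℝ) := by
    rw [huw, inner_neg_right, real_inner_smul_right]
  have e2 : ‖u - w‖ ^ 2 = L⁻¹ ^ 2 * ‖d‖ ^ 2 := by
    rw [huw, norm_neg, norm_smul, Real.norm_eq_abs, mul_pow, sq_abs]
  have e3 : ⟪g' x, u - x⟫_ℝ = ⟪g' x, w - x⟫_ℝ - L⁻¹ * ⟪g' x, d⟫_ℝ := by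
    rw [hux, inner_sub_right, real_inner_smul_right]
  have e4 : ⟪g' w, d⟫_ℝ - ⟪g' x, d⟫_ℝ = ‖d‖ ^ 2 := by
    rw [← inner_sub_left, ← hd, real_inner_self_eq_norm_sq]
  have hnd : ‖g' x - g' w‖ = ‖d‖ := by rw [hd, norm_sub_rev]
  rw [hnd]
  rw [e1, e2] at hA
  rw [e3] at hB
  have hL' : L ≠ 0 := ne_of_gt hL
  have hLc : L * L⁻¹ = 1 := mul_inv_cancel₀ hL'
  have hLc2 : L / 2 * (L⁻¹ ^ 2 * ‖d‖ ^ 2) = L⁻¹ / 2 * ‖d‖ ^ 2 := by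
    field_simp
  have e4c : L⁻¹ * ⟪g' w, d⟫_ℝ - L⁻¹ * ⟪g' x, d⟫_ℝ = L⁻¹ * ‖d‖ ^ 2 := by
    rw [← mul_sub, e4]
  have hmain : L⁻¹ / 2 * ‖d‖ ^ 2 ≤ g w - g x - ⟪g' x, w - x⟫_ℝ := by
    linarith [hA, hB, e4c, hLc2]
  have hfin := mul_le_mul_of_nonneg_left hmain (by positivity : (0:ℝ) ≤ 2 * L)
  have heq : 2 * L * (L⁻¹ / 2 * ‖d‖ ^ 2) = ‖d‖ ^ 2 := by
    calc 2 * L * (L⁻¹ / 2 * ‖d‖ ^ 2) = (L * L⁻¹) * ‖d‖ ^ 2 := by ring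
      _ = ‖d‖ ^ 2 := by rw [hLc, one_mul]
  linarith

end Aux

/-- Variance bound for the importance-sampled gradient difference: if
`f = (1/n)∑ f_j` with each `f_j` convex and `L_j`-smooth, `L̄ = (1/n)∑ L_j`, and `j` is
sampled with probability `p_j = L_j/(n L̄)`, then for any `x, w`:
`E_j[‖(1/(n p_j))(∇f_j x − ∇f_j w)‖²] ≤ 2L̄·(f w − f x − ⟪∇f x, w − x⟫)`. -/
theorem stmt9 {p n : ℕ} (hn : 0 < n)
    (f : Fin n → EuclideanSpace ℝ (Fin p) → ℝ)
    (f' : Fin n → EuclideanSpace ℝ (Fin p) → EuclideanSpace ℝ (Fin p))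
    (Lj : Fin n → ℝ) (hLj : ∀ j, 0 < Lj j)
    (hgrad : ∀ j x, HasGradientAt (f j) (f' j x) x)
    (hconv : ∀ j, ConvexOn ℝ Set.univ (f j))
    (hlip : ∀ j x y, ‖f' j x - f' j y‖ ≤ Lj j * ‖x - y‖)
    (Lbar : ℝ) (hLbar : Lbar = (n : ℝ)⁻¹ * ∑ j, Lj j)
    (pj : Fin n → ℝ) (hpj : ∀ j, pj j = Lj j / ((n : ℝ) * Lbar))
    (x w : EuclideanSpace ℝ (Fin p)) :
    ∑ j, pj j * ‖((n : ℝ) * pj j)⁻¹ • (f' j x - f' j w)‖ ^ 2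
      ≤ 2 * Lbar * ((n : ℝ)⁻¹ * ∑ j, f j w - (n : ℝ)⁻¹ * ∑ j, f j x
          - ⟪(n : ℝ)⁻¹ • ∑ j, f' j x, w - x⟫_ℝ) := by
  have hnpos : (0 : ℝ) < n := Nat.cast_pos.2 hn
  have hLbarpos : 0 < Lbar := by
    rw [hLbar]
    exact mul_pos (inv_pos.2 hnpos)
      (Finset.sum_pos (fun j _ => hLj j) (Finset.univ_nonempty_iff.2 ⟨⟨0, hn⟩⟩))
  -- simplify n * pj j
  have hnpj : ∀ j, (n : ℝ) * pj j = Lj j / Lbar := by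
    intro j
    rw [hpj j]
    field_simp
  -- pointwise bound
  have hterm : ∀ j, pj j * ‖((n : ℝ) * pj j)⁻¹ • (f' j x - f' j w)‖ ^ 2
      ≤ 2 * Lbar * ((n : ℝ)⁻¹ * (f j w - f j x - ⟪f' j x, w - x⟫_ℝ)) := by
    intro j
    have hkey := grad_sq_le (hLj j) (hconv j) (hgrad j) (hlip j) x w
    have hLjpos := hLj j
    have hcoef : pj j * (((n : ℝ) * pj j)⁻¹) ^ 2 = Lbar / ((n : ℝ) * Lj j) := by
      have h1 : ((n : ℝ) * pj j)⁻¹ = Lbar / Lj j := by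
        rw [hnpj j, inv_div]
      rw [h1, hpj j]
      field_simp
    have hnorm : ‖((n : ℝ) * pj j)⁻¹ • (f' j x - f' j w)‖ ^ 2
        = (((n : ℝ) * pj j)⁻¹) ^ 2 * ‖f' j x - f' j w‖ ^ 2 := by
      rw [norm_smul, Real.norm_eq_abs, mul_pow, sq_abs]
    rw [hnorm, ← mul_assoc, hcoef]
    have hcpos : 0 < Lbar / ((n : ℝ) * Lj j) :=
      div_pos hLbarpos (mul_pos hnpos hLjpos)
    calc Lbar / ((n : ℝ) * Lj j) * ‖f' j x - f' j w‖ ^ 2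
        ≤ Lbar / ((n : ℝ) * Lj j) *
          (2 * Lj j * (f j w - f j x - ⟪f' j x, w - x⟫_ℝ)) :=
          mul_le_mul_of_nonneg_left hkey hcpos.le
      _ = 2 * Lbar * ((n : ℝ)⁻¹ * (f j w - f j x - ⟪f' j x, w - x⟫_ℝ)) := by
          field_simp
  calc ∑ j, pj j * ‖((n : ℝ) * pj j)⁻¹ • (f' j x - f' j w)‖ ^ 2
      ≤ ∑ j, 2 * Lbar * ((n : ℝ)⁻¹ * (f j w - f j x - ⟪f' j x, w - x⟫_ℝ)) :=
        Finset.sum_le_sum fun j _ => hterm j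
    _ = 2 * Lbar * ((n : ℝ)⁻¹ * ∑ j, f j w - (n : ℝ)⁻¹ * ∑ j, f j x
          - ⟪(n : ℝ)⁻¹ • ∑ j, f' j x, w - x⟫_ℝ) := by
        rw [real_inner_smul_left, sum_inner]
        rw [← Finset.mul_sum, ← Finset.mul_sum]
        rw [Finset.sum_sub_distrib, Finset.sum_sub_distrib]
        ring
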